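/- Let a₀ > 0, a₁ > 0, a₂ > 0, and β > γ > 1. Define ψ(z) = −a₀ − a₁ z^β + a₂ z^γ. Then ψ(z) < 0 for all z ∈ [0,+∞) if and only if a₀ · a₁^{γ/(β−γ)} > a₂^{β/(β−γ)} · ((γ/β)^{γ/(β−γ)} − (γ/β)^{β/(β−γ)}). -/

import Mathlib

open Set Filter

/-- Signed power: `⌊x⌉^a = sign(x) * |x|^a`. -/
noncomputable def spow (x a : ℝ) : ℝ := Real.sign x * |x| ^ a

/-- Dilation `Λ_r(l, x) = (l^{r₁} x₁, …, l^{rₙ} xₙ)`. -/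
noncomputable def dil {n : ℕ} (r : Fin n → ℝ) (l : ℝ) (x : Fin n → ℝ) : Fin n → ℝ :=
  fun i => l ^ r i * x i

/-- `x` is a solution of `ẋ = F(x)` on `[s, ∞)`. -/
def IsSolOn {E : Type*} [NormedAddCommGroup E] [NormedSpace ℝ E]
    (F : E → E) (x : ℝ → E) (s : ℝ) : Prop :=
  ∀ t ∈ Set.Ici s, HasDerivWithinAt x (F (x t)) (Set.Ici s) t

/-- The origin is (locally) asymptotically stable for `ẋ = F(x)`. -/
def AsympStable {E : Type*} [NormedAddCommGroup E] [NormedSpace ℝ E] (F : E → E) : Prop :=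
  (∀ ε > 0, ∃ η > 0, ∀ x : ℝ → E, IsSolOn F x 0 → ‖x 0‖ < η → ∀ t ≥ 0, ‖x t‖ < ε) ∧
  (∃ δ > 0, ∀ x : ℝ → E, IsSolOn F x 0 → ‖x 0‖ < δ →
    Filter.Tendsto x Filter.atTop (nhds 0))

/-- The origin is small-time stable for `ẋ = F(x)`. -/
def SmallTimeStable {E : Type*} [NormedAddCommGroup E] [NormedSpace ℝ E] (F : E → E) : Prop :=
  ∀ ε > 0, ∃ η > 0, ∀ x : ℝ → E, IsSolOn F x 0 → ‖x 0‖ < η →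
    x ε = 0 ∧ ∀ t ≥ 0, ‖x t‖ < ε

/-!
`ψ < 0` on `[0, ∞)` says that `a₀` exceeds the maximum of `a₂ z^γ - a₁ z^β` there. The substitution
`z = (a₂/a₁)^{1/(β-γ)} t` turns this function into `a₂^{β/(β-γ)} a₁^{-γ/(β-γ)} (t^γ - t^β)`, and
weighted AM-GM with weights `γ/β`, `(β-γ)/β` gives `t^γ ≤ t^β + (β-γ)/β · (γ/β)^{γ/(β-γ)}`, with
equality at `t = (γ/β)^{1/(β-γ)}`; so the maximum of `t^γ - t^β` is
`(γ/β)^{γ/(β-γ)} - (γ/β)^{β/(β-γ)}`.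
-/

open Real

lemma div_rpow_sub_div_rpow_eq {β γ : ℝ} (hγ : 0 < γ) (hγβ : γ < β) :
    (γ/β) ^ (γ/(β-γ)) - (γ/β) ^ (β/(β-γ)) = (β-γ)/β * (γ/β) ^ (γ/(β-γ)) := by
  have hδ : β - γ ≠ 0 := (sub_pos.2 hγβ).ne'
  have hβ : β ≠ 0 := (hγ.trans hγβ).ne'
  rw [show β/(β-γ) = γ/(β-γ) + 1 by field_simp; ring, rpow_add (div_pos hγ (hγ.trans hγβ)),
    rpow_one]
  field_simp

lemma rpow_sub_rpow_le {β γ t : ℝ} (hγ : 0 < γ) (hγβ : γ < β) (ht : 0 ≤ t) :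
    t ^ γ - t ^ β ≤ (γ/β) ^ (γ/(β-γ)) - (γ/β) ^ (β/(β-γ)) := by
  have hδ : 0 < β - γ := sub_pos.2 hγβ
  have hβ : 0 < β := hγ.trans hγβ
  have hw : 0 < γ/β := by positivity
  set s := (γ/β) ^ (γ/(β-γ))
  -- `s` is chosen so that `s ^ ((β-γ)/β)` cancels the factor `(γ/β) ^ (γ/β)` on the left
  have amgm := geom_mean_le_arith_mean2_weighted hw.le (by positivity : 0 ≤ (β-γ)/β)
    (by positivity : 0 ≤ t ^ β / (γ/β)) (by positivity : 0 ≤ s) (by field_simp; ring)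
  have hs : s ^ ((β-γ)/β) = (γ/β) ^ (γ/β) := by
    rw [← rpow_mul hw.le]; congr 1; field_simp
  have ht' : (t ^ β) ^ (γ/β) = t ^ γ := by
    rw [← rpow_mul ht]; congr 1; field_simp
  rw [div_rpow (by positivity) hw.le, ht', hs, div_mul_cancel₀ _ (by positivity),
    mul_div_cancel₀ _ hw.ne'] at amgm
  rw [div_rpow_sub_div_rpow_eq hγ hγβ]
  linarith

lemma rpow_sub_rpow_at_crit {β γ : ℝ} (hγ : 0 < γ) (hγβ : γ < β) :
    ((γ/β) ^ (1/(β-γ))) ^ γ - ((γ/β) ^ (1/(β-γ))) ^ β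
      = (γ/β) ^ (γ/(β-γ)) - (γ/β) ^ (β/(β-γ)) := by
  have hw : 0 ≤ γ/β := div_nonneg hγ.le (hγ.trans hγβ).le
  rw [← rpow_mul hw, ← rpow_mul hw, one_div_mul_eq_div, one_div_mul_eq_div]

lemma isGreatest_rpow_sub_rpow {β γ : ℝ} (hγ : 0 < γ) (hγβ : γ < β) :
    IsGreatest ((fun t => t ^ γ - t ^ β) '' Ici 0)
      ((γ/β) ^ (γ/(β-γ)) - (γ/β) ^ (β/(β-γ))) := by
  have hw : 0 ≤ γ/β := div_nonneg hγ.le (hγ.trans hγβ).le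
  refine ⟨⟨(γ/β) ^ (1/(β-γ)), mem_Ici.2 (rpow_nonneg hw _), rpow_sub_rpow_at_crit hγ hγβ⟩, ?_⟩
  rintro _ ⟨t, ht, rfl⟩
  exact rpow_sub_rpow_le hγ hγβ ht

lemma mul_rpow_sub_mul_rpow_of_scale {a₁ a₂ β γ t : ℝ} (h₁ : 0 < a₁) (h₂ : 0 < a₂)
    (hγβ : γ < β) (ht : 0 ≤ t) :
    a₂ * ((a₂/a₁) ^ (1/(β-γ)) * t) ^ γ - a₁ * ((a₂/a₁) ^ (1/(β-γ)) * t) ^ β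
      = a₂ ^ (β/(β-γ)) / a₁ ^ (γ/(β-γ)) * (t ^ γ - t ^ β) := by
  have hδ : β - γ ≠ 0 := (sub_pos.2 hγβ).ne'
  have hr : 0 < a₂/a₁ := div_pos h₂ h₁
  have hβ : β/(β-γ) = γ/(β-γ) + 1 := by field_simp; ring
  rw [mul_rpow (by positivity) ht, mul_rpow (by positivity) ht, ← rpow_mul hr.le,
    ← rpow_mul hr.le, one_div_mul_eq_div, one_div_mul_eq_div, hβ, rpow_add hr, rpow_one,
    rpow_add h₂, rpow_one, div_rpow h₂.le h₁.le]
  field_simp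

lemma isGreatest_mul_rpow_sub_mul_rpow {a₁ a₂ β γ : ℝ} (h₁ : 0 < a₁) (h₂ : 0 < a₂)
    (hγ : 0 < γ) (hγβ : γ < β) :
    IsGreatest ((fun z => a₂ * z ^ γ - a₁ * z ^ β) '' Ici 0)
      (a₂ ^ (β/(β-γ)) / a₁ ^ (γ/(β-γ)) * ((γ/β) ^ (γ/(β-γ)) - (γ/β) ^ (β/(β-γ)))) := by
  set c := (a₂/a₁) ^ (1/(β-γ))
  have hc : 0 < c := rpow_pos_of_pos (div_pos h₂ h₁) _
  obtain ⟨⟨t, ht, ht_max⟩, h_ub⟩ := isGreatest_rpow_sub_rpow hγ hγβ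
  refine ⟨⟨c * t, mem_Ici.2 (mul_nonneg hc.le ht), ?_⟩, ?_⟩
  · dsimp only at ht_max ⊢
    rw [mul_rpow_sub_mul_rpow_of_scale h₁ h₂ hγβ ht, ht_max]
  · rintro _ ⟨z, hz, rfl⟩
    have hz' : 0 ≤ z / c := div_nonneg hz hc.le
    have h_scale := mul_rpow_sub_mul_rpow_of_scale h₁ h₂ hγβ hz'
    rw [mul_div_cancel₀ z hc.ne'] at h_scale
    dsimp only
    rw [h_scale]
    exact mul_le_mul_of_nonneg_left (h_ub ⟨z / c, hz', rfl⟩) (by positivity)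

theorem stmt14 (a₀ a₁ a₂ β γ : ℝ) (h₁ : 0 < a₁) (h₂ : 0 < a₂)
    (hβγ : γ < β) (hγ : 1 < γ) :
    (∀ z ∈ Set.Ici (0:ℝ), -a₀ - a₁ * z ^ β + a₂ * z ^ γ < 0) ↔
      a₂ ^ (β/(β-γ)) * ((γ/β) ^ (γ/(β-γ)) - (γ/β) ^ (β/(β-γ))) < a₀ * a₁ ^ (γ/(β-γ)) := by
  have h_max := isGreatest_mul_rpow_sub_mul_rpow h₁ h₂ (zero_lt_one.trans hγ) hβγ
  rw [div_mul_eq_mul_div] at h_max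
  rw [← div_lt_iff₀ (rpow_pos_of_pos h₁ _), h_max.lt_iff, forall_mem_image]
  refine forall₂_congr fun z _ => ?_
  constructor <;> intro h <;> linarith
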